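/- There exists an ∃GFG alternating Streett automaton A with transition conditions in disjunctive normal form such that Eve has no function σ : Σ⁺ → Boxes_A with the property that for every word w ∈ L(A), the box sequence (σ(w restricted to its first i+1 letters))_{i∈ℕ} is universally accepting for A; that is, Eve cannot resolve the nondeterminism of A based only on the word read so far. -/

import Mathlib

set_option autoImplicit false
set_option linter.unusedVariables false

/-! ### Positive Boolean formulas -/

inductive PosBool (Q : Type) : Type
  | atom : Q → PosBool Q
  | and : PosBool Q → PosBool Q → PosBool Q
  | or : PosBool Q → PosBool Q → PosBool Q

namespace PosBool

variable {Q : Type}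

/-- The possible outcomes of Eve resolving all the disjunctions of a positive
Boolean formula: each element of `eveRes φ` is the set of atoms that Adam can
reach (by resolving the conjunctions) against that fixed resolution of Eve.
These are exactly the `q`-boxes of the one-step game over the formula `φ`. -/
def eveRes : PosBool Q → Set (Set Q)
  | atom q => {{q}}
  | and f g => {s | ∃ u ∈ eveRes f, ∃ v ∈ eveRes g, s = u ∪ v}
  | or f g => eveRes f ∪ eveRes g

/-- The dual formula: swap disjunctions and conjunctions. -/
def dual : PosBool Q → PosBool Q
  | atom q => atom q
  | and f g => or (dual f) (dual g)
  | or f g => and (dual f) (dual g)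

/-- Length (number of nodes) of a formula. -/
def size : PosBool Q → ℕ
  | atom _ => 1
  | and f g => size f + size g + 1
  | or f g => size f + size g + 1

/-- Atoms occurring in a formula. -/
def atoms : PosBool Q → Set Q
  | atom q => {q}
  | and f g => atoms f ∪ atoms g
  | or f g => atoms f ∪ atoms g

/-- A purely conjunctive formula (no disjunctions). -/
def NoOr : PosBool Q → Prop
  | atom _ => True
  | and f g => NoOr f ∧ NoOr g
  | or _ _ => False

/-- A purely disjunctive formula (no conjunctions). -/
def NoAnd : PosBool Q → Prop
  | atom _ => True
  | and _ _ => False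
  | or f g => NoAnd f ∧ NoAnd g

/-- Disjunctive normal form: a disjunction of conjunctions. -/
def IsDNF : PosBool Q → Prop
  | or f g => IsDNF f ∧ IsDNF g
  | φ => NoOr φ

end PosBool

/-! ### Acceptance conditions -/

/-- `c` appears infinitely often in `f`. -/
def InfOften (f : ℕ → ℕ) (c : ℕ) : Prop := ∀ n, ∃ m, n ≤ m ∧ f m = c

/-- The parity condition: the highest value appearing infinitely often is even. -/
def ParityAccept (f : ℕ → ℕ) : Prop :=
  ∃ c, Even c ∧ InfOften f c ∧ ∀ d, InfOften f d → d ≤ c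

/-- The sequence `ρ` visits the set `S` infinitely often. -/
def InfOftenIn {T : Type} (ρ : ℕ → T) (S : Set T) : Prop := ∀ n, ∃ m, n ≤ m ∧ ρ m ∈ S

/-- A Rabin (or Streett) pair of sets of transitions. -/
structure RabinPair (T : Type) where
  bad : Set T
  good : Set T

/-- The Rabin condition for pairs `⟨B_i, G_i⟩`, `i < k`: for some `i`,
`inf(ρ) ∩ B_i = ∅` and `inf(ρ) ∩ G_i ≠ ∅`. -/
def RabinAccept {T : Type} {k : ℕ} (pairs : Fin k → RabinPair T) (ρ : ℕ → T) : Prop :=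
  ∃ i, ¬ InfOftenIn ρ (pairs i).bad ∧ InfOftenIn ρ (pairs i).good

/-- The Streett condition for pairs `⟨B_i, G_i⟩`, `i < k`: for every `i`,
`inf(ρ) ∩ B_i = ∅` or `inf(ρ) ∩ G_i ≠ ∅`. -/
def StreettAccept {T : Type} {k : ℕ} (pairs : Fin k → RabinPair T) (ρ : ℕ → T) : Prop :=
  ∀ i, ¬ InfOftenIn ρ (pairs i).bad ∨ InfOftenIn ρ (pairs i).good

/-! ### Generic two-player games of infinite duration.

A game proceeds in rounds; in each round, from the current game state, up to
six moves are played in alternation: Adam moves first (`a1`), then Eve (`e1`),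
then Adam (`a2`), then Eve (`e2`), then Adam (`a3`), then Eve (`e3`).
(Unused phases are modelled by the type `Unit`.)  Strategies may use the full
history of the play (the list of previous complete rounds) as well as the moves
already played in the current round.  Eve wins an infinite play iff the
sequence of rounds satisfies the winning condition `win`. -/

structure GameRound (St α1 β1 α2 β2 α3 β3 : Type) where
  st : St
  a1 : α1
  e1 : β1
  a2 : α2
  e2 : β2
  a3 : α3
  e3 : β3

structure Game (St α1 β1 α2 β2 α3 β3 : Type) where
  init : St
  A1 : St → Set α1
  E1 : St → α1 → Set β1
  A2 : St → α1 → β1 → Set α2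
  E2 : St → α1 → β1 → α2 → Set β2
  A3 : St → α1 → β1 → α2 → β2 → Set α3
  E3 : St → α1 → β1 → α2 → β2 → α3 → Set β3
  next : St → α1 → β1 → α2 → β2 → α3 → β3 → St
  win : (ℕ → GameRound St α1 β1 α2 β2 α3 β3) → Prop

namespace Game

variable {St α1 β1 α2 β2 α3 β3 : Type}

/-- The states along the play are correctly updated. -/
def StateOk (G : Game St α1 β1 α2 β2 α3 β3) (ρ : ℕ → GameRound St α1 β1 α2 β2 α3 β3) : Prop :=
  (ρ 0).st = G.init ∧
  ∀ n, (ρ (n+1)).st = G.next (ρ n).st (ρ n).a1 (ρ n).e1 (ρ n).a2 (ρ n).e2 (ρ n).a3 (ρ n).e3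

/-- Round `n` of the play is entirely legal. -/
def RoundLegal (G : Game St α1 β1 α2 β2 α3 β3) (ρ : ℕ → GameRound St α1 β1 α2 β2 α3 β3)
    (n : ℕ) : Prop :=
  (ρ n).a1 ∈ G.A1 (ρ n).st ∧
  (ρ n).e1 ∈ G.E1 (ρ n).st (ρ n).a1 ∧
  (ρ n).a2 ∈ G.A2 (ρ n).st (ρ n).a1 (ρ n).e1 ∧
  (ρ n).e2 ∈ G.E2 (ρ n).st (ρ n).a1 (ρ n).e1 (ρ n).a2 ∧
  (ρ n).a3 ∈ G.A3 (ρ n).st (ρ n).a1 (ρ n).e1 (ρ n).a2 (ρ n).e2 ∧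
  (ρ n).e3 ∈ G.E3 (ρ n).st (ρ n).a1 (ρ n).e1 (ρ n).a2 (ρ n).e2 (ρ n).a3

/-- All rounds before round `n` are entirely legal. -/
def Hleg (G : Game St α1 β1 α2 β2 α3 β3) (ρ : ℕ → GameRound St α1 β1 α2 β2 α3 β3)
    (n : ℕ) : Prop :=
  ∀ m, m < n → RoundLegal G ρ m

/-- Eve wins the play `ρ`: she is never the first player to make an illegal
move (the moves of each round are ordered `a1, e1, a2, e2, a3, e3`), and if all
moves are legal then the play satisfies the winning condition. -/
def EveWinsPlay (G : Game St α1 β1 α2 β2 α3 β3)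
    (ρ : ℕ → GameRound St α1 β1 α2 β2 α3 β3) : Prop :=
  (∀ n, Hleg G ρ n → (ρ n).a1 ∈ G.A1 (ρ n).st →
      (ρ n).e1 ∈ G.E1 (ρ n).st (ρ n).a1) ∧
  (∀ n, Hleg G ρ n → (ρ n).a1 ∈ G.A1 (ρ n).st →
      (ρ n).e1 ∈ G.E1 (ρ n).st (ρ n).a1 →
      (ρ n).a2 ∈ G.A2 (ρ n).st (ρ n).a1 (ρ n).e1 →
      (ρ n).e2 ∈ G.E2 (ρ n).st (ρ n).a1 (ρ n).e1 (ρ n).a2) ∧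
  (∀ n, Hleg G ρ n → (ρ n).a1 ∈ G.A1 (ρ n).st →
      (ρ n).e1 ∈ G.E1 (ρ n).st (ρ n).a1 →
      (ρ n).a2 ∈ G.A2 (ρ n).st (ρ n).a1 (ρ n).e1 →
      (ρ n).e2 ∈ G.E2 (ρ n).st (ρ n).a1 (ρ n).e1 (ρ n).a2 →
      (ρ n).a3 ∈ G.A3 (ρ n).st (ρ n).a1 (ρ n).e1 (ρ n).a2 (ρ n).e2 →
      (ρ n).e3 ∈ G.E3 (ρ n).st (ρ n).a1 (ρ n).e1 (ρ n).a2 (ρ n).e2 (ρ n).a3) ∧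
  ((∀ n, RoundLegal G ρ n) → G.win ρ)

/-- Adam wins the play `ρ`: he is never the first player to make an illegal
move, and if all moves are legal then the play violates the (Eve) winning
condition. -/
def AdamWinsPlay (G : Game St α1 β1 α2 β2 α3 β3)
    (ρ : ℕ → GameRound St α1 β1 α2 β2 α3 β3) : Prop :=
  (∀ n, Hleg G ρ n → (ρ n).a1 ∈ G.A1 (ρ n).st) ∧
  (∀ n, Hleg G ρ n → (ρ n).a1 ∈ G.A1 (ρ n).st →
      (ρ n).e1 ∈ G.E1 (ρ n).st (ρ n).a1 →
      (ρ n).a2 ∈ G.A2 (ρ n).st (ρ n).a1 (ρ n).e1) ∧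
  (∀ n, Hleg G ρ n → (ρ n).a1 ∈ G.A1 (ρ n).st →
      (ρ n).e1 ∈ G.E1 (ρ n).st (ρ n).a1 →
      (ρ n).a2 ∈ G.A2 (ρ n).st (ρ n).a1 (ρ n).e1 →
      (ρ n).e2 ∈ G.E2 (ρ n).st (ρ n).a1 (ρ n).e1 (ρ n).a2 →
      (ρ n).a3 ∈ G.A3 (ρ n).st (ρ n).a1 (ρ n).e1 (ρ n).a2 (ρ n).e2) ∧
  ((∀ n, RoundLegal G ρ n) → ¬ G.win ρ)

/-- The history of a play before round `n`: the list of the first `n` rounds. -/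
def hist (ρ : ℕ → GameRound St α1 β1 α2 β2 α3 β3) (n : ℕ) : List (GameRound St α1 β1 α2 β2 α3 β3) :=
  (List.range n).map ρ

/-- A strategy of Eve: for each of her three moves in a round, a choice
depending on the history, the current state, and the moves already played
in the current round. -/
structure EStrat (St α1 β1 α2 β2 α3 β3 : Type) where
  f1 : List (GameRound St α1 β1 α2 β2 α3 β3) → St → α1 → β1
  f2 : List (GameRound St α1 β1 α2 β2 α3 β3) → St → α1 → β1 → α2 → β2
  f3 : List (GameRound St α1 β1 α2 β2 α3 β3) → St → α1 → β1 → α2 → β2 → α3 → β3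

/-- A strategy of Adam. -/
structure AStrat (St α1 β1 α2 β2 α3 β3 : Type) where
  g1 : List (GameRound St α1 β1 α2 β2 α3 β3) → St → α1
  g2 : List (GameRound St α1 β1 α2 β2 α3 β3) → St → α1 → β1 → α2
  g3 : List (GameRound St α1 β1 α2 β2 α3 β3) → St → α1 → β1 → α2 → β2 → α3

/-- The play `ρ` is consistent with the strategy `σ` of Eve. -/
def ConsE (σ : EStrat St α1 β1 α2 β2 α3 β3) (ρ : ℕ → GameRound St α1 β1 α2 β2 α3 β3) : Prop :=
  ∀ n, (ρ n).e1 = σ.f1 (hist ρ n) (ρ n).st (ρ n).a1 ∧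
       (ρ n).e2 = σ.f2 (hist ρ n) (ρ n).st (ρ n).a1 (ρ n).e1 (ρ n).a2 ∧
       (ρ n).e3 = σ.f3 (hist ρ n) (ρ n).st (ρ n).a1 (ρ n).e1 (ρ n).a2 (ρ n).e2 (ρ n).a3

/-- The play `ρ` is consistent with the strategy `τ` of Adam. -/
def ConsA (τ : AStrat St α1 β1 α2 β2 α3 β3) (ρ : ℕ → GameRound St α1 β1 α2 β2 α3 β3) : Prop :=
  ∀ n, (ρ n).a1 = τ.g1 (hist ρ n) (ρ n).st ∧
       (ρ n).a2 = τ.g2 (hist ρ n) (ρ n).st (ρ n).a1 (ρ n).e1 ∧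
       (ρ n).a3 = τ.g3 (hist ρ n) (ρ n).st (ρ n).a1 (ρ n).e1 (ρ n).a2 (ρ n).e2

/-- `σ` is a winning strategy for Eve: every play consistent with `σ` is won
by Eve. -/
def EveWinningStrat (G : Game St α1 β1 α2 β2 α3 β3) (σ : EStrat St α1 β1 α2 β2 α3 β3) : Prop :=
  ∀ ρ, StateOk G ρ → ConsE σ ρ → EveWinsPlay G ρ

/-- Eve wins the game `G`. -/
def EveWins (G : Game St α1 β1 α2 β2 α3 β3) : Prop := ∃ σ, EveWinningStrat G σ

/-- `τ` is a winning strategy for Adam: every play consistent with `τ` is won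
by Adam. -/
def AdamWinningStrat (G : Game St α1 β1 α2 β2 α3 β3) (τ : AStrat St α1 β1 α2 β2 α3 β3) : Prop :=
  ∀ ρ, StateOk G ρ → ConsA τ ρ → AdamWinsPlay G ρ

/-- Adam wins the game `G`. -/
def AdamWins (G : Game St α1 β1 α2 β2 α3 β3) : Prop := ∃ τ, AdamWinningStrat G τ

end Game
/-! ### Alternating automata on infinite words -/

/-- An alternating automaton over the alphabet `A`: a set of states, an initial
state, a transition function assigning to each state and letter a positive
Boolean formula over the states, and an acceptance condition `acc` on infinite
sequences of transitions `(q_n, a_n, q_{n+1})`. -/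
structure AltAut (A : Type) where
  Q : Type
  init : Q
  delta : Q → A → PosBool Q
  acc : (ℕ → Q × A × Q) → Prop

namespace AltAut

variable {A : Type}

/-- `M` is a parity automaton with priority labelling `p`. -/
def IsParity (M : AltAut A) (p : M.Q → A → M.Q → ℕ) : Prop :=
  ∀ ρ, M.acc ρ ↔ ParityAccept fun n => p (ρ n).1 (ρ n).2.1 (ρ n).2.2

/-- `M` is a Rabin automaton with the Rabin pairs `pairs`. -/
def IsRabin (M : AltAut A) {k : ℕ} (pairs : Fin k → RabinPair (M.Q × A × M.Q)) : Prop :=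
  ∀ ρ, M.acc ρ ↔ RabinAccept pairs ρ

/-- `M` is a Streett automaton with the Streett pairs `pairs`. -/
def IsStreett (M : AltAut A) {k : ℕ} (pairs : Fin k → RabinPair (M.Q × A × M.Q)) : Prop :=
  ∀ ρ, M.acc ρ ↔ StreettAccept pairs ρ

/-- `M` is a Büchi automaton with accepting transitions `F`. -/
def IsBuchi (M : AltAut A) (F : Set (M.Q × A × M.Q)) : Prop :=
  ∀ ρ, M.acc ρ ↔ InfOftenIn ρ F

/-- `M` is a weak automaton (with parity labelling `p`): every path following
transitions of the automaton eventually remains in a single priority. -/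
def IsWeak (M : AltAut A) (p : M.Q → A → M.Q → ℕ) : Prop :=
  M.IsParity p ∧
  ∀ ρ : ℕ → M.Q × A × M.Q,
    (∀ n, (ρ n).2.2 = (ρ (n+1)).1 ∧ (ρ n).2.2 ∈ PosBool.atoms (M.delta (ρ n).1 (ρ n).2.1)) →
    ∃ N c, ∀ n, N ≤ n → p (ρ n).1 (ρ n).2.1 (ρ n).2.2 = c

/-- `M` is nondeterministic: all transition conditions are disjunctive. -/
def IsNondet (M : AltAut A) : Prop := ∀ q a, (M.delta q a).NoAnd

/-- `M` is universal: all transition conditions are conjunctive. -/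
def IsUniversal (M : AltAut A) : Prop := ∀ q a, (M.delta q a).NoOr

/-- The dual automaton: swap disjunctions and conjunctions, and dualise the
acceptance condition. -/
def dual (M : AltAut A) : AltAut A where
  Q := M.Q
  init := M.init
  delta q a := (M.delta q a).dual
  acc ρ := ¬ M.acc ρ

/-- The model-checking (acceptance) game of `M` over the word `w`.  A round
from state `q` at step `n`: Eve resolves the disjunctions of `δ(q, w_n)`
(choosing an element of `eveRes`), and Adam resolves the conjunctions
(choosing a state in that set).  Eve wins iff the resulting path of
transitions is accepting. -/
def mcGame (M : AltAut A) (w : ℕ → A) :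
    Game (ℕ × M.Q) Unit (Set M.Q) M.Q Unit Unit Unit where
  init := (0, M.init)
  A1 _ := Set.univ
  E1 p _ := PosBool.eveRes (M.delta p.2 (w p.1))
  A2 _ _ S := S
  E2 _ _ _ _ := Set.univ
  A3 _ _ _ _ _ := Set.univ
  E3 _ _ _ _ _ _ := Set.univ
  next p _ _ q' _ _ _ := (p.1 + 1, q')
  win ρ := M.acc fun n => ((ρ n).st.2, w n, (ρ n).a2)

/-- The language of `M`: the words for which Eve wins the model-checking game. -/
def Lang (M : AltAut A) : Set (ℕ → A) := {w | Game.EveWins (M.mcGame w)}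

/-- Eve's letter game on `M`: Adam picks a letter, then the one-step formula is
resolved (Eve the disjunctions, Adam the conjunctions).  Eve wins iff the word
played is not in `L(M)` or the path produced is accepting. -/
def eLetterGame (M : AltAut A) : Game M.Q A (Set M.Q) M.Q Unit Unit Unit where
  init := M.init
  A1 _ := Set.univ
  E1 q a := PosBool.eveRes (M.delta q a)
  A2 _ _ S := S
  E2 _ _ _ _ := Set.univ
  A3 _ _ _ _ _ := Set.univ
  E3 _ _ _ _ _ _ := Set.univ
  next _ _ _ q' _ _ _ := q'
  win ρ := (fun n => (ρ n).a1) ∉ M.Lang ∨ M.acc fun n => ((ρ n).st, (ρ n).a1, (ρ n).a2)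

/-- Adam's letter game on `M`: Eve picks a letter and resolves the disjunctions
of the one-step formula, Adam resolves the conjunctions.  Adam wins iff the
word played is in `L(M)` or the path produced is rejecting; accordingly the
condition `win` (for Eve) is that the word is not in `L(M)` and the path is
accepting. -/
def aLetterGame (M : AltAut A) : Game M.Q Unit (A × Set M.Q) M.Q Unit Unit Unit where
  init := M.init
  A1 _ := Set.univ
  E1 q _ := {m : A × Set M.Q | m.2 ∈ PosBool.eveRes (M.delta q m.1)}
  A2 _ _ m := m.2
  E2 _ _ _ _ := Set.univ
  A3 _ _ _ _ _ := Set.univ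
  E3 _ _ _ _ _ _ := Set.univ
  next _ _ _ q' _ _ _ := q'
  win ρ := (fun n => (ρ n).e1.1) ∉ M.Lang ∧ M.acc fun n => ((ρ n).st, (ρ n).e1.1, (ρ n).a2)

/-- `M` is ∃GFG: Eve wins her letter game. -/
def ExistsGFG (M : AltAut A) : Prop := Game.EveWins M.eLetterGame

/-- `M` is ∀GFG: Adam wins his letter game. -/
def ForallGFG (M : AltAut A) : Prop := Game.AdamWins M.aLetterGame

/-- `M` is good-for-games: it is both ∃GFG and ∀GFG. -/
def GFG (M : AltAut A) : Prop := M.ExistsGFG ∧ M.ForallGFG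

/-- `b` is a box of `M` over the letter `a`: a simultaneous resolution, for
every state `q`, of the disjunctions of `δ(q, a)`; `b q` is the set of states
Adam can reach from `q` against this resolution. -/
def IsBox (M : AltAut A) (a : A) (b : M.Q → Set M.Q) : Prop :=
  ∀ q, b q ∈ PosBool.eveRes (M.delta q a)

/-- The boxes of `M` (over all letters), as an alphabet. -/
def Boxes (M : AltAut A) : Type := {β : A × (M.Q → Set M.Q) // M.IsBox β.1 β.2}

/-- A sequence of (letter, box) pairs is universally accepting for `M` if every
path through it starting at the initial state is accepting. -/
def UnivAcceptingRaw (M : AltAut A) (u : ℕ → A × (M.Q → Set M.Q)) : Prop :=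
  ∀ ρ : ℕ → M.Q, ρ 0 = M.init → (∀ n, ρ (n+1) ∈ (u n).2 (ρ n)) →
    M.acc fun n => (ρ n, (u n).1, ρ (n+1))

/-- The set of universally accepting words over the alphabet of boxes of `M`. -/
def UnivAccLang (M : AltAut A) : Set (ℕ → M.Boxes) :=
  {u | M.UnivAcceptingRaw fun n => (u n).val}

/-- The size of an automaton: the maximum of the size of the alphabet, the
number of states and the total length of the transition conditions. -/
noncomputable def sizeN (M : AltAut A) : ℕ :=
  max (Nat.card A) (max (Nat.card M.Q) (∑ᶠ q : M.Q, ∑ᶠ a : A, (M.delta q a).size))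

/-- The two-token game `G₂(M)` on an alternating automaton `M`.  A configuration
is a triple of states `(p, q₁, q₂)`; in each turn Adam picks a letter `a`, the
players resolve `δ_M(p, a)` (Eve the disjunctions, Adam the conjunctions),
producing a transition of Eve's token, and then resolve `δ_{M̄}(q₁, a)` and
`δ_{M̄}(q₂, a)` in the dual automaton (Adam the disjunctions, Eve the
conjunctions), producing transitions of Adam's two tokens.  Eve wins iff her
path is accepting in `M`, or both of Adam's paths are rejecting in `M`. -/
def G2 (M : AltAut A) :
    Game (M.Q × M.Q × M.Q) A (Set M.Q) (M.Q × Set M.Q × Set M.Q) (M.Q × M.Q) Unit Unit where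
  init := (M.init, M.init, M.init)
  A1 _ := Set.univ
  E1 c a := PosBool.eveRes (M.delta c.1 a)
  A2 c a S := {m | m.1 ∈ S ∧ m.2.1 ∈ PosBool.eveRes (M.dual.delta c.2.1 a) ∧
                   m.2.2 ∈ PosBool.eveRes (M.dual.delta c.2.2 a)}
  E2 _ _ _ m := {x | x.1 ∈ m.2.1 ∧ x.2 ∈ m.2.2}
  A3 _ _ _ _ _ := Set.univ
  E3 _ _ _ _ _ _ := Set.univ
  next c _ _ m x _ _ := (m.1, x.1, x.2)
  win ρ :=
    M.acc (fun n => ((ρ n).st.1, (ρ n).a1, (ρ n).a2.1)) ∨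
    (¬ M.acc (fun n => ((ρ n).st.2.1, (ρ n).a1, (ρ n).e2.1)) ∧
     ¬ M.acc (fun n => ((ρ n).st.2.2, (ρ n).a1, (ρ n).e2.2)))

end AltAut

/-! ### Deterministic and nondeterministic parity automata -/

/-- A deterministic parity automaton over the alphabet `A` (priorities on
transitions). -/
structure DPA (A : Type) where
  S : Type
  init : S
  step : S → A → S
  prio : S → A → ℕ

namespace DPA

variable {A : Type}

/-- The (unique) run of `D` on `w`. -/
def run (D : DPA A) (w : ℕ → A) : ℕ → D.S
  | 0 => D.init
  | n + 1 => D.step (D.run w n) (w n)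

/-- The language of `D`. -/
def Lang (D : DPA A) : Set (ℕ → A) :=
  {w | ParityAccept fun n => D.prio (D.run w n) (w n)}

end DPA

/-- A nondeterministic parity automaton over the alphabet `A`, with an abstract
set `T` of transitions, each with a source, a letter, a destination and a
priority. -/
structure NPA (A : Type) where
  S : Type
  init : S
  T : Type
  src : T → S
  lab : T → A
  dst : T → S
  prio : T → ℕ

namespace NPA

variable {A : Type}

/-- `r` is a run of `N` over `w`. -/
def IsRun (N : NPA A) (w : ℕ → A) (r : ℕ → N.T) : Prop :=
  N.src (r 0) = N.init ∧ (∀ n, N.src (r (n+1)) = N.dst (r n)) ∧ ∀ n, N.lab (r n) = w n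

/-- The language of `N`: the words admitting an accepting run. -/
def Lang (N : NPA A) : Set (ℕ → A) :=
  {w | ∃ r, N.IsRun w r ∧ ParityAccept fun n => N.prio (r n)}

/-- The letter game on `N`: Adam picks letters, Eve picks transitions; Eve wins
iff the word played is not in `L(N)` or her run is accepting. -/
def letterGame (N : NPA A) : Game N.S A N.T Unit Unit Unit Unit where
  init := N.init
  A1 _ := Set.univ
  E1 s a := {t | N.src t = s ∧ N.lab t = a}
  A2 _ _ _ := Set.univ
  E2 _ _ _ _ := Set.univ
  A3 _ _ _ _ _ := Set.univ
  E3 _ _ _ _ _ _ := Set.univ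
  next _ _ t _ _ _ _ := N.dst t
  win ρ := (fun n => (ρ n).a1) ∉ N.Lang ∨ ParityAccept fun n => N.prio (ρ n).e1

/-- `N` is good-for-games. -/
def GFG (N : NPA A) : Prop := Game.EveWins N.letterGame

/-- The two-token game `G₂(N)` on a nondeterministic automaton `N`: Adam picks
a letter, Eve picks a transition for her token, Adam picks transitions for his
two tokens.  Eve wins iff her run is accepting or both of Adam's runs are
rejecting. -/
def G2 (N : NPA A) : Game (N.S × N.S × N.S) A N.T (N.T × N.T) Unit Unit Unit where
  init := (N.init, N.init, N.init)
  A1 _ := Set.univ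
  E1 c a := {t | N.src t = c.1 ∧ N.lab t = a}
  A2 c a _ := {m | N.src m.1 = c.2.1 ∧ N.lab m.1 = a ∧ N.src m.2 = c.2.2 ∧ N.lab m.2 = a}
  E2 _ _ _ _ := Set.univ
  A3 _ _ _ _ _ := Set.univ
  E3 _ _ _ _ _ _ := Set.univ
  next _ _ t m _ _ _ := (N.dst t, N.dst m.1, N.dst m.2)
  win ρ :=
    ParityAccept (fun n => N.prio (ρ n).e1) ∨
    (¬ ParityAccept (fun n => N.prio (ρ n).a2.1) ∧
     ¬ ParityAccept (fun n => N.prio (ρ n).a2.2))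

end NPA

/-- The nondeterministic parity automaton `A^□` obtained from an alternating
automaton `M` and a deterministic parity automaton `B` over the alphabet of
boxes of `M`: upon reading a letter `a`, it nondeterministically chooses a box
of `M` over `a` and follows the transition of `B` over that box. -/
def boxNPA {A : Type} (M : AltAut A) (B : DPA M.Boxes) : NPA A where
  S := B.S
  init := B.init
  T := B.S × M.Boxes
  src t := t.1
  lab t := t.2.val.1
  dst t := B.step t.1 t.2
  prio t := B.prio t.1 t.2

/-! ### Word-based (positional) strategies in the expanded letter game

In the expanded letter game, positions record the whole finite word played so
far; a positional strategy of Eve therefore depends only on the word read so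
far and the current state.  Such a strategy is given by a function
`f : List A → M.Q → Set M.Q`, where `f (w ++ [a]) q` is Eve's resolution of
the disjunctions of `δ(q, a)` after the word `w ++ [a]` has been played. -/

/-- `f` is a valid word-based strategy: it always chooses resolutions of the
current one-step formula. -/
def WordStratValid {A : Type} (M : AltAut A) (f : List A → M.Q → Set M.Q) : Prop :=
  ∀ (l : List A) (a : A) (q : M.Q), f (l ++ [a]) q ∈ PosBool.eveRes (M.delta q a)

/-- The strategy of Eve in the letter game induced by a word-based strategy:
it only looks at the sequence of letters played so far and the current state. -/
def wordStrat {A : Type} (M : AltAut A) (f : List A → M.Q → Set M.Q) :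
    Game.EStrat M.Q A (Set M.Q) M.Q Unit Unit Unit where
  f1 h q a := f ((h.map fun r => r.a1) ++ [a]) q
  f2 _ _ _ _ _ := ()
  f3 _ _ _ _ _ _ _ := ()

/-- The prefix of length `n` of an infinite word. -/
def wordPref {A : Type} (w : ℕ → A) (n : ℕ) : List A := (List.range n).map w

/-! Over a one-letter alphabet a word-based strategy is a single box sequence, blind to the path
Adam builds.  Take the automaton whose paths run `s → c1|c2 → q → r1|r2 → s → ⋯`, Adam branching at
`s` (a conjunction) and Eve choosing at `q` (a disjunction), which accepts iff the branch `s → c2`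
recurs exactly when the choice `q → r2` recurs.  Remembering the previous state, Eve copies Adam's
branch and wins.  All paths are synchronised (the state at time `n` is determined by `n mod 4` up
to the branch taken), so a single box sequence picks `r2` at the visits of `q` on every path
alike: either infinitely often, and then the path always branching to `c1` is rejecting, or only
finitely often, and then the path always branching to `c2` is. -/

theorem Filter.frequently_atTop_add_nat_iff {p : ℕ → Prop} (k : ℕ) :
    (∃ᶠ n in Filter.atTop, p (n + k)) ↔ ∃ᶠ n in Filter.atTop, p n := by
  conv_rhs => rw [← Filter.map_add_atTop_eq_nat k, Filter.frequently_map]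

theorem infOftenIn_iff_frequently {T : Type} (ρ : ℕ → T) (S : Set T) :
    InfOftenIn ρ S ↔ ∃ᶠ n in Filter.atTop, ρ n ∈ S :=
  Filter.frequently_atTop.symm

theorem exists_seq_mem_preferring {α : Type*} (b : ℕ → α → Set α)
    (hb : ∀ n x, (b n x).Nonempty) (x₀ c : α) :
    ∃ ρ : ℕ → α, ρ 0 = x₀ ∧ ∀ n, ρ (n + 1) ∈ b n (ρ n) ∧ (c ∈ b n (ρ n) → ρ (n + 1) = c) := by
  classical
  let next (n : ℕ) (x : α) : α := if c ∈ b n x then c else (hb n x).some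
  refine ⟨fun n => Nat.rec x₀ next n, rfl, fun n => ?_⟩
  show next n _ ∈ _ ∧ (_ → next n _ = c)
  by_cases h : c ∈ b n (Nat.rec x₀ next n) <;> simp [next, h, (hb n _).some_mem]

theorem wordPref_succ {A : Type} (w : ℕ → A) (n : ℕ) :
    wordPref w (n + 1) = wordPref w n ++ [w n] := by
  simp [wordPref, List.range_succ]

theorem getLast?_wordPref_succ {A : Type} (w : ℕ → A) (n : ℕ) :
    (wordPref w (n + 1)).getLast? = some (w n) := by
  simp [wordPref_succ]

namespace PosBool

variable {Q : Type}

theorem nonempty_of_mem_eveRes {φ : PosBool Q} {s : Set Q} (h : s ∈ φ.eveRes) : s.Nonempty := by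
  induction φ generalizing s with
  | atom q => exact h ▸ Set.singleton_nonempty q
  | and f g ihf _ =>
    obtain ⟨u, hu, v, -, rfl⟩ := h
    exact (ihf hu).mono Set.subset_union_left
  | or f g ihf ihg => exact h.elim ihf ihg

theorem subset_atoms_of_mem_eveRes {φ : PosBool Q} {s : Set Q} (h : s ∈ φ.eveRes) :
    s ⊆ φ.atoms := by
  induction φ generalizing s with
  | atom q => exact h.le
  | and f g ihf ihg =>
    obtain ⟨u, hu, v, hv, rfl⟩ := h
    exact Set.union_subset_union (ihf hu) (ihg hv)
  | or f g ihf ihg =>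
    rcases h with h | h
    · exact (ihf h).trans Set.subset_union_left
    · exact (ihg h).trans Set.subset_union_right

end PosBool

theorem WordStratValid.isBox {A : Type} {M : AltAut A} {f : List A → M.Q → Set M.Q}
    (hf : WordStratValid M f) (w : ℕ → A) (n : ℕ) : M.IsBox (w n) (f (wordPref w (n + 1))) := by
  rw [wordPref_succ]
  exact hf _ _

namespace AltAut

variable {A : Type} (M : AltAut A)

def IsHistoryResolution (c : List M.Q → M.Q → A → Set M.Q) : Prop :=
  ∀ l q a, c l q a ∈ PosBool.eveRes (M.delta q a)

def FollowsResolution (c : List M.Q → M.Q → A → Set M.Q) (w : ℕ → A) (ρ : ℕ → M.Q) : Prop :=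
  ρ 0 = M.init ∧ ∀ n, ρ (n + 1) ∈ c (wordPref ρ n) (ρ n) (w n)

variable {M}

theorem existsGFG_of_resolution {c : List M.Q → M.Q → A → Set M.Q}
    (hc : M.IsHistoryResolution c)
    (hacc : ∀ w ρ, M.FollowsResolution c w ρ → M.acc fun n => (ρ n, w n, ρ (n + 1))) :
    M.ExistsGFG := by
  refine ⟨⟨fun h q a => c (h.map GameRound.st) q a, fun _ _ _ _ _ => (),
    fun _ _ _ _ _ _ _ => ()⟩, ?_⟩
  rintro ρ ⟨h0, hnext⟩ hcons
  refine ⟨fun n _ _ => (hcons n).1 ▸ hc _ _ _, fun _ _ _ _ _ => trivial,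
    fun _ _ _ _ _ _ _ => trivial, fun hlegal => Or.inr ?_⟩
  have hst : ∀ n, (ρ (n + 1)).st = (ρ n).a2 := hnext
  have hpath : M.FollowsResolution c (fun n => (ρ n).a1) fun n => (ρ n).st := by
    refine ⟨h0, fun n => ?_⟩
    have hmove := (hlegal n).2.2.1
    rw [(hcons n).1] at hmove
    simpa [hst, Game.hist, wordPref, AltAut.eLetterGame, Function.comp_def] using hmove
  simpa only [hst] using hacc _ _ hpath

theorem mem_lang_of_resolution {c : List M.Q → M.Q → A → Set M.Q}
    (hc : M.IsHistoryResolution c) (w : ℕ → A)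
    (hacc : ∀ ρ, M.FollowsResolution c w ρ → M.acc fun n => (ρ n, w n, ρ (n + 1))) :
    w ∈ M.Lang := by
  refine ⟨⟨fun h p _ => c (h.map fun r => r.st.2) p.2 (w p.1), fun _ _ _ _ _ => (),
    fun _ _ _ _ _ _ _ => ()⟩, ?_⟩
  rintro ρ ⟨h0, hnext⟩ hcons
  have hst : ∀ n, (ρ (n + 1)).st = ((ρ n).st.1 + 1, (ρ n).a2) := hnext
  have hpos : ∀ n, (ρ n).st.1 = n := by
    intro n
    induction n with
    | zero => rw [h0]; rfl
    | succ n ih => rw [hst, ih]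
  refine ⟨fun n _ _ => (hcons n).1 ▸ hc _ _ _, fun _ _ _ _ _ => trivial,
    fun _ _ _ _ _ _ _ => trivial, fun hlegal => ?_⟩
  have hpath : M.FollowsResolution c w fun n => (ρ n).st.2 := by
    refine ⟨congrArg Prod.snd h0, fun n => ?_⟩
    have hmove := (hlegal n).2.2.1
    rw [(hcons n).1] at hmove
    simpa [hst, hpos, Game.hist, wordPref, AltAut.mcGame, Function.comp_def] using hmove
  show M.acc _
  simpa only [hst, hpos] using hacc _ hpath

end AltAut

namespace BranchMemory

inductive St : Type
  | s | c1 | c2 | q | r1 | r2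
deriving DecidableEq

instance : Fintype St :=
  ⟨{.s, .c1, .c2, .q, .r1, .r2}, fun x => by cases x <;> simp⟩

def deltaSt : St → PosBool St
  | .s => .and (.atom .c1) (.atom .c2)
  | .c1 => .atom .q
  | .c2 => .atom .q
  | .q => .or (.atom .r1) (.atom .r2)
  | .r1 => .atom .s
  | .r2 => .atom .s

def pairs : Fin 2 → RabinPair (St × Unit × St) :=
  ![⟨{(.s, (), .c2)}, {(.q, (), .r2)}⟩, ⟨{(.q, (), .r2)}, {(.s, (), .c2)}⟩]

abbrev M : AltAut Unit where
  Q := St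
  init := .s
  delta x _ := deltaSt x
  acc := StreettAccept pairs

theorem isDNF_delta (x : St) (a : Unit) : (M.delta x a).IsDNF := by
  cases x <;> simp [deltaSt, PosBool.IsDNF, PosBool.NoOr]

theorem acc_iff (ρ : ℕ → St) (w : ℕ → Unit) :
    M.acc (fun n => (ρ n, w n, ρ (n + 1))) ↔
      ((∃ᶠ n in Filter.atTop, ρ n = .s ∧ ρ (n + 1) = .c2) ↔
        ∃ᶠ n in Filter.atTop, ρ n = .q ∧ ρ (n + 1) = .r2) := by
  simp only [M, StreettAccept, Fin.forall_fin_two, pairs, infOftenIn_iff_frequently,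
    Matrix.cons_val_zero, Matrix.cons_val_one, Set.mem_singleton_iff, Prod.mk.injEq,
    true_and]
  tauto

def rememberBranch (prev : Option St) : St → Set St
  | .s => {.c1, .c2}
  | .c1 => {.q}
  | .c2 => {.q}
  | .q => if prev = some .c2 then {.r2} else {.r1}
  | .r1 => {.s}
  | .r2 => {.s}

theorem rememberBranch_mem_eveRes (prev : Option St) (x : St) :
    rememberBranch prev x ∈ (deltaSt x).eveRes := by
  cases x
  case s => exact ⟨{.c1}, rfl, {.c2}, rfl, Set.singleton_union.symm⟩
  case q => by_cases h : prev = some .c2 <;> simp [rememberBranch, h, deltaSt, PosBool.eveRes]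
  all_goals rfl

theorem eq_s_of_c2_mem_rememberBranch {prev : Option St} {x : St}
    (h : St.c2 ∈ rememberBranch prev x) : x = .s := by
  cases x <;> simp only [rememberBranch] at h <;> (try split_ifs at h) <;> simp_all

theorem eq_c2_of_r2_mem_rememberBranch {prev : Option St} {x : St}
    (h : St.r2 ∈ rememberBranch prev x) : prev = some .c2 := by
  cases x <;> simp only [rememberBranch] at h <;> (try split_ifs at h) <;> simp_all

theorem rememberBranch_accepting (w : ℕ → Unit) (ρ : ℕ → St)
    (hρ : ∀ n, ρ (n + 1) ∈ rememberBranch (wordPref ρ n).getLast? (ρ n)) :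
    M.acc fun n => (ρ n, w n, ρ (n + 1)) := by
  have hstep : ∀ n, ρ (n + 2) ∈ rememberBranch (some (ρ n)) (ρ (n + 1)) := fun n => by
    simpa [getLast?_wordPref_succ] using hρ (n + 1)
  have hforth : ∀ m, ρ m = .s ∧ ρ (m + 1) = .c2 → ρ (m + 2) = .q ∧ ρ (m + 3) = .r2 := by
    rintro m ⟨-, hc2⟩
    have hq : ρ (m + 2) = .q := by simpa [hc2, rememberBranch] using hstep m
    exact ⟨hq, by simpa [hc2, hq, rememberBranch] using hstep (m + 1)⟩
  have hback : ∀ m, ρ (m + 2) = .q ∧ ρ (m + 3) = .r2 → ρ m = .s ∧ ρ (m + 1) = .c2 := by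
    rintro m ⟨-, hr2⟩
    have hc2 : ρ (m + 1) = .c2 :=
      Option.some_injective _ (eq_c2_of_r2_mem_rememberBranch (hr2 ▸ hstep (m + 1)))
    exact ⟨eq_s_of_c2_mem_rememberBranch (hc2 ▸ hρ m), hc2⟩
  rw [acc_iff]
  exact ⟨fun h => (Filter.frequently_atTop_add_nat_iff 2).1 (h.mono hforth),
    fun h => ((Filter.frequently_atTop_add_nat_iff 2).2 h).mono hback⟩

theorem isHistoryResolution : M.IsHistoryResolution fun l x _ => rememberBranch l.getLast? x :=
  fun _ _ _ => rememberBranch_mem_eveRes _ _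

theorem existsGFG : M.ExistsGFG :=
  AltAut.existsGFG_of_resolution isHistoryResolution fun w ρ hρ =>
    rememberBranch_accepting w ρ hρ.2

theorem mem_lang (w : ℕ → Unit) : w ∈ M.Lang :=
  AltAut.mem_lang_of_resolution isHistoryResolution w fun ρ hρ =>
    rememberBranch_accepting w ρ hρ.2

def level : St → ZMod 4
  | .s => 0
  | .c1 | .c2 => 1
  | .q => 2
  | .r1 | .r2 => 3

theorem level_of_mem_atoms {x y : St} (h : y ∈ (deltaSt x).atoms) : level y = level x + 1 := by
  cases x <;> simp only [deltaSt, PosBool.atoms, Set.mem_union, Set.mem_singleton_iff] at h <;>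
    rcases h with rfl | rfl <;> rfl

theorem level_eq_zero_iff (x : St) : level x = 0 ↔ x = .s := by
  cases x <;> decide

theorem level_eq_two_iff (x : St) : level x = 2 ↔ x = .q := by
  cases x <;> decide

theorem c1_c2_mem_of_isBox {B : St → Set St} (hB : M.IsBox () B) :
    St.c1 ∈ B .s ∧ St.c2 ∈ B .s := by
  obtain ⟨u, rfl, v, rfl, hs⟩ := hB .s
  simp [hs]

theorem not_toC2_of_prefer_c1 {b : ℕ → St → Set St} (hb : ∀ n, M.IsBox () (b n)) {ρ : ℕ → St}
    (hc1 : ∀ n, St.c1 ∈ b n (ρ n) → ρ (n + 1) = .c1) (n : ℕ) : ¬ (ρ n = .s ∧ ρ (n + 1) = .c2) := by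
  rintro ⟨hs, hc2⟩
  have hpref := hc1 n (hs ▸ (c1_c2_mem_of_isBox (hb n)).1)
  rw [hc2] at hpref
  cases hpref

section BoxPath

variable {b : ℕ → St → Set St} (hb : ∀ n, M.IsBox () (b n)) {ρ : ℕ → St}
  (h0 : ρ 0 = .s) (hρ : ∀ n, ρ (n + 1) ∈ b n (ρ n))
include hb h0 hρ

theorem level_boxPath (n : ℕ) : level (ρ n) = n := by
  induction n with
  | zero => rw [h0]; rfl
  | succ n ih =>
    rw [level_of_mem_atoms (PosBool.subset_atoms_of_mem_eveRes (hb n (ρ n)) (hρ n)), ih]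
    push_cast; rfl

theorem toR2_iff_of_boxPath (n : ℕ) :
    (ρ n = .q ∧ ρ (n + 1) = .r2) ↔ ((n : ZMod 4) = 2 ∧ b n .q = {.r2}) := by
  have hq : ρ n = .q ↔ (n : ZMod 4) = 2 := by
    rw [← level_eq_two_iff, level_boxPath hb h0 hρ n]
  rw [← hq]
  constructor
  · rintro ⟨hρq, hr2⟩
    have hmem := hρ n
    rw [hρq, hr2] at hmem
    refine ⟨hρq, (hb n .q).resolve_left fun h => ?_⟩
    rw [h] at hmem
    cases hmem
  · rintro ⟨hρq, hbox⟩
    exact ⟨hρq, by simpa [hρq, hbox] using hρ n⟩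

theorem frequently_toR2_iff_of_boxPath :
    (∃ᶠ n in Filter.atTop, ρ n = .q ∧ ρ (n + 1) = .r2) ↔
      ∃ᶠ n : ℕ in Filter.atTop, (n : ZMod 4) = 2 ∧ b n .q = {.r2} := by
  simp only [toR2_iff_of_boxPath hb h0 hρ]

theorem frequently_toC2_of_prefer_c2 (hc2 : ∀ n, St.c2 ∈ b n (ρ n) → ρ (n + 1) = .c2) :
    ∃ᶠ n in Filter.atTop, ρ n = .s ∧ ρ (n + 1) = .c2 := by
  refine Filter.frequently_atTop.2 fun N => ⟨4 * N, by omega, ?_⟩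
  have hs : ρ (4 * N) = .s := by
    rw [← level_eq_zero_iff, level_boxPath hb h0 hρ]
    push_cast
    exact zero_mul _
  exact ⟨hs, hc2 _ (hs ▸ (c1_c2_mem_of_isBox (hb _)).2)⟩

end BoxPath

theorem not_univAcceptingRaw (b : ℕ → St → Set St) (hb : ∀ n, M.IsBox () (b n)) :
    ¬ M.UnivAcceptingRaw fun n => ((), b n) := by
  intro hacc
  have hne n x : (b n x).Nonempty := PosBool.nonempty_of_mem_eveRes (hb n x)
  obtain ⟨ρ₁, h₁0, h₁⟩ := exists_seq_mem_preferring b hne .s .c1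
  obtain ⟨ρ₂, h₂0, h₂⟩ := exists_seq_mem_preferring b hne .s .c2
  have acc₁ := (acc_iff ρ₁ fun _ => ()).1 (hacc ρ₁ h₁0 fun n => (h₁ n).1)
  have acc₂ := (acc_iff ρ₂ fun _ => ()).1 (hacc ρ₂ h₂0 fun n => (h₂ n).1)
  rw [frequently_toR2_iff_of_boxPath hb h₁0 fun n => (h₁ n).1] at acc₁
  rw [frequently_toR2_iff_of_boxPath hb h₂0 fun n => (h₂ n).1] at acc₂
  have hc2 := frequently_toC2_of_prefer_c2 hb h₂0 (fun n => (h₂ n).1) fun n => (h₂ n).2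
  obtain ⟨n, hn⟩ := (acc₁.2 (acc₂.1 hc2)).exists
  exact not_toC2_of_prefer_c1 hb (fun n => (h₁ n).2) n hn

end BranchMemory

theorem streett_no_word_based_box_strategy :
    ∃ (Alph : Type) (M : AltAut Alph),
      Finite Alph ∧ Finite M.Q ∧
      (∃ (k : ℕ) (pairs : Fin k → RabinPair (M.Q × Alph × M.Q)), M.IsStreett pairs) ∧
      (∀ q a, (M.delta q a).IsDNF) ∧
      M.ExistsGFG ∧
      ¬ ∃ f : List Alph → M.Q → Set M.Q,
          WordStratValid M f ∧
          ∀ w ∈ M.Lang,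
            M.UnivAcceptingRaw fun i => (w i, f (wordPref w (i + 1))) := by
  refine ⟨Unit, BranchMemory.M, inferInstance, inferInstanceAs (Finite BranchMemory.St),
    ⟨2, BranchMemory.pairs, fun _ => Iff.rfl⟩, BranchMemory.isDNF_delta, BranchMemory.existsGFG, ?_⟩
  rintro ⟨f, hf, hacc⟩
  exact BranchMemory.not_univAcceptingRaw _ (hf.isBox fun _ => ())
    (hacc _ (BranchMemory.mem_lang _))
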